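/- arXiv:1706.03291 — 2 statements merged into one kernel-verified Lean document; each statement's English description precedes it below -/
import Mathlib

section
/- Let K and L be essentially small tt-categories with K rigid, let F : K → L be a tt-functor and φ = Spc(F) : Spc(L) → Spc(K) the induced map. Then the following are equivalent: (a) F is conservative, i.e. F detects isomorphisms (equivalently, F(x) ≅ 0 implies x ≅ 0); (b) φ is surjective on closed points, i.e. for every closed point P of Spc(K) there exists Q ∈ Spc(L) such that φ(Q) = P. -/
/-!
Basic notions of tensor-triangular geometry (Balmer), formalized from scratch:
tt-categories (pretriangulated + monoidal, with tensor exact in each variable),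
tt-ideals, prime tt-ideals, the Balmer spectrum `Spc` with its topology,
tensor powers of objects and morphisms, rigidity.
-/

open CategoryTheory Category Limits ZeroObject Pretriangulated MonoidalCategory

universe v u v' u'

namespace TT

variable (K : Type u) [Category.{v} K] [HasZeroObject K] [Preadditive K]
  [HasShift K ℤ] [∀ n : ℤ, (shiftFunctor K n).Additive] [Pretriangulated K]
  [MonoidalCategory K]

/-- The tensor is exact (triangulated) in each variable: tensoring a distinguished
triangle with an object (on either side) again yields a distinguished triangle. -/
def TensorExact : Prop :=
  ∀ (x : K) (T : Triangle K), (T ∈ distTriang K) →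
    (∃ h : x ⊗ T.obj₃ ⟶ (x ⊗ T.obj₁)⟦(1:ℤ)⟧,
      Triangle.mk (x ◁ T.mor₁) (x ◁ T.mor₂) h ∈ distTriang K) ∧
    (∃ h : T.obj₃ ⊗ x ⟶ (T.obj₁ ⊗ x)⟦(1:ℤ)⟧,
      Triangle.mk (T.mor₁ ▷ x) (T.mor₂ ▷ x) h ∈ distTriang K)

/-- Rigidity: every object `x` has a dual `x^∨`, i.e. takes part in an exact pairing
(coevaluation `η : 𝟙 ⟶ x^∨ ⊗ x` and evaluation `ε : x ⊗ x^∨ ⟶ 𝟙` satisfying the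
triangle identities, which yield the adjunction `x ⊗ - ⊣ x^∨ ⊗ -`). -/
def Rigid : Prop := ∀ x : K, ∃ xd : K, Nonempty (ExactPairing xd x)

variable {K}

/-- A tt-ideal: a (full, replete) class of objects closed under shifts, cones,
direct summands (retracts) and tensoring with arbitrary objects. -/
structure IsTTIdeal (I : Set K) : Prop where
  zero_mem : (0 : K) ∈ I
  shift_mem : ∀ (n : ℤ), ∀ x ∈ I, (x⟦n⟧ : K) ∈ I
  cone_mem : ∀ T : Triangle K, (T ∈ distTriang K) → T.obj₁ ∈ I → T.obj₂ ∈ I → T.obj₃ ∈ I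
  retract_mem : ∀ x z : K, z ∈ I → ∀ (i : x ⟶ z) (r : z ⟶ x), i ≫ r = 𝟙 x → x ∈ I
  tensor_mem : ∀ x ∈ I, ∀ y : K, x ⊗ y ∈ I
  tensor_mem' : ∀ x ∈ I, ∀ y : K, y ⊗ x ∈ I

/-- A prime tt-ideal: a proper tt-ideal `P` such that `x ⊗ y ∈ P` implies
`x ∈ P` or `y ∈ P`. -/
structure IsPrimeTTIdeal (P : Set K) extends IsTTIdeal P : Prop where
  ne_univ : P ≠ Set.univ
  mem_or_mem : ∀ x y : K, x ⊗ y ∈ P → x ∈ P ∨ y ∈ P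

variable (K) in
/-- The Balmer spectrum: the set of prime tt-ideals. -/
def Spc := {P : Set K // IsPrimeTTIdeal P}

/-- The Balmer topology on `Spc K`, generated by the basic open subsets
`U(x) = {P ∈ Spc K | x ∈ P}`. -/
instance : TopologicalSpace (Spc K) :=
  TopologicalSpace.generateFrom {U | ∃ x : K, U = {P : Spc K | x ∈ P.1}}

/-- The tt-ideal `⟨E⟩` generated by a class of objects `E`. -/
def ttIdealGen (E : Set K) : Set K := ⋂₀ {I : Set K | IsTTIdeal I ∧ E ⊆ I}

/-- `n`-fold tensor power of an object (`x^⊗0 = 𝟙`). -/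
def opow (x : K) : ℕ → K
  | 0 => 𝟙_ K
  | n + 1 => opow x n ⊗ x

/-- `n`-fold tensor power `f^⊗n` of a morphism. -/
def mpow {x y : K} (f : x ⟶ y) : ∀ n : ℕ, (opow x n ⟶ opow y n)
  | 0 => 𝟙 _
  | n + 1 => mpow f n ⊗ₘ f

end TT

/-!
A closed point `P` of `Spc K` is a minimal prime. If `F` is conservative, the objects `F s`
with `s ∉ P` form a ⊗-multiplicative class of nonzero objects of `L`; a tt-ideal maximal among those
avoiding it is prime (Balmer's prime avoidance), and its preimage, contained in `P`, equals `P` by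
minimality. Conversely, if `F f` is invertible, the cone `z` of `f` satisfies `F z ≅ 0`, so `z` lies
in every prime of the form `φ Q`, hence in every closed point, hence in every prime, since every
prime contains a minimal one. By rigidity `y ⊗ z` is a retract of `y ⊗ z ⊗ z ⊗ z^∨`, so no tensor
power of a nonzero `z` vanishes, and prime avoidance applied to the powers of `z` gives a prime
missing `z`; thus `z ≅ 0` and `f` is invertible.
-/

namespace TT

lemma isZero_of_retract {C : Type u} [Category.{v} C] [HasZeroMorphisms C] {x z : C}
    (h : Retract x z) (hz : IsZero z) : IsZero x := by
  rw [IsZero.iff_id_eq_zero, ← h.retract, hz.eq_of_tgt h.i 0, zero_comp]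

lemma mem_shift_iff_of_mem_shift_one_iff {C : Type u} [Category.{v} C] [HasShift C ℤ]
    {J : Set C} (hJ : ∀ {x y : C}, (x ≅ y) → y ∈ J → x ∈ J)
    (h₁ : ∀ x : C, x⟦(1 : ℤ)⟧ ∈ J ↔ x ∈ J) (n : ℤ) (x : C) : x⟦n⟧ ∈ J ↔ x ∈ J := by
  have mem_congr : ∀ {x y : C}, (x ≅ y) → (x ∈ J ↔ y ∈ J) := fun e => ⟨hJ e.symm, hJ e⟩
  induction n using Int.induction_on with
  | zero => exact mem_congr ((shiftFunctorZero C ℤ).app x)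
  | succ n ih =>
    exact (mem_congr ((shiftFunctorAdd' C (n : ℤ) 1 (n + 1) rfl).app x)).trans ((h₁ _).trans ih)
  | pred n ih =>
    exact (h₁ _).symm.trans
      ((mem_congr ((shiftFunctorAdd' C (-(n : ℤ) - 1) 1 (-n) (by ring)).app x)).symm.trans ih)

lemma nonempty_opow_add_iso {C : Type u} [Category.{v} C] [MonoidalCategory C] (x : C) (n m : ℕ) :
    Nonempty (opow x (n + m) ≅ opow x n ⊗ opow x m) := by
  induction m with
  | zero => exact ⟨(ρ_ (opow x n)).symm⟩
  | succ m ih =>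
    obtain ⟨e⟩ := ih
    exact ⟨whiskerRightIso e x ≪≫ α_ (opow x n) (opow x m) x⟩

lemma isZero_of_isZero_map {C : Type u} [Category.{v} C] [HasZeroMorphisms C] [HasZeroObject C]
    {D : Type u'} [Category.{v'} D] [HasZeroMorphisms D] (F : C ⥤ D) [F.PreservesZeroMorphisms]
    (hF : ∀ ⦃x y : C⦄ (f : x ⟶ y), IsIso (F.map f) → IsIso f) {x : C} (hx : IsZero (F.obj x)) :
    IsZero x :=
  ((isIsoZero_iff_source_target_isZero x 0).1
    (hF _ (hx.isIso (F.map_isZero (isZero_zero C)) (F.map 0)))).1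

variable {C : Type u} [Category.{v} C] [HasZeroObject C] [Preadditive C]
  [HasShift C ℤ] [∀ n : ℤ, (shiftFunctor C n).Additive] [Pretriangulated C]
  [MonoidalCategory C]

section Ideals

namespace IsTTIdeal

variable {I : Set C} (hI : IsTTIdeal I)
include hI

lemma mem_of_iso {x y : C} (e : x ≅ y) (hy : y ∈ I) : x ∈ I :=
  hI.retract_mem x y hy e.hom e.inv e.hom_inv_id

lemma mem_of_isZero {x : C} (hx : IsZero x) : x ∈ I :=
  hI.mem_of_iso hx.isoZero hI.zero_mem

lemma shift_mem_iff (n : ℤ) (x : C) : x⟦n⟧ ∈ I ↔ x ∈ I :=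
  ⟨fun h => hI.mem_of_iso ((shiftFunctorCompIsoId C n (-n) (add_neg_cancel n)).app x).symm
    (hI.shift_mem (-n) _ h), hI.shift_mem n x⟩

lemma eq_univ_of_unit_mem (h : 𝟙_ C ∈ I) : I = Set.univ :=
  Set.eq_univ_of_forall fun y => hI.mem_of_iso (λ_ y).symm (hI.tensor_mem _ h y)

end IsTTIdeal

lemma IsPrimeTTIdeal.unit_not_mem {P : Set C} (hP : IsPrimeTTIdeal P) : 𝟙_ C ∉ P :=
  fun h => hP.ne_univ (hP.eq_univ_of_unit_mem h)

lemma isTTIdeal_sInter {S : Set (Set C)} (hS : ∀ I ∈ S, IsTTIdeal I) : IsTTIdeal (⋂₀ S) where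
  zero_mem I hI := (hS I hI).zero_mem
  shift_mem n x hx I hI := (hS I hI).shift_mem n x (hx I hI)
  cone_mem T hT h₁ h₂ I hI := (hS I hI).cone_mem T hT (h₁ I hI) (h₂ I hI)
  retract_mem x z hz i r hir I hI := (hS I hI).retract_mem x z (hz I hI) i r hir
  tensor_mem x hx y I hI := (hS I hI).tensor_mem x (hx I hI) y
  tensor_mem' x hx y I hI := (hS I hI).tensor_mem' x (hx I hI) y

lemma isTTIdeal_sUnion_of_isChain {S : Set (Set C)} (hS : ∀ I ∈ S, IsTTIdeal I)
    (hchain : IsChain (· ⊆ ·) S) (hne : S.Nonempty) : IsTTIdeal (⋃₀ S) where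
  zero_mem := hne.elim fun I hI => ⟨I, hI, (hS I hI).zero_mem⟩
  shift_mem n x := fun ⟨I, hI, hx⟩ => ⟨I, hI, (hS I hI).shift_mem n x hx⟩
  cone_mem T hT := fun ⟨I, hI, h₁⟩ ⟨J, hJ, h₂⟩ => by
    rcases hchain.total hI hJ with hIJ | hJI
    · exact ⟨J, hJ, (hS J hJ).cone_mem T hT (hIJ h₁) h₂⟩
    · exact ⟨I, hI, (hS I hI).cone_mem T hT h₁ (hJI h₂)⟩
  retract_mem x z := fun ⟨I, hI, hz⟩ i r hir => ⟨I, hI, (hS I hI).retract_mem x z hz i r hir⟩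
  tensor_mem x := fun ⟨I, hI, hx⟩ y => ⟨I, hI, (hS I hI).tensor_mem x hx y⟩
  tensor_mem' x := fun ⟨I, hI, hx⟩ y => ⟨I, hI, (hS I hI).tensor_mem' x hx y⟩

lemma isTTIdeal_ttIdealGen (E : Set C) : IsTTIdeal (ttIdealGen E) :=
  isTTIdeal_sInter fun _ hI => hI.1

lemma subset_ttIdealGen (E : Set C) : E ⊆ ttIdealGen E :=
  fun _ hx _ hI => hI.2 hx

lemma ttIdealGen_subset {E I : Set C} (hI : IsTTIdeal I) (hEI : E ⊆ I) : ttIdealGen E ⊆ I :=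
  fun _ hx => hx I ⟨hI, hEI⟩

lemma isPrimeTTIdeal_sInter_of_isChain {S : Set (Set C)} (hS : ∀ P ∈ S, IsPrimeTTIdeal P)
    (hchain : IsChain (· ⊆ ·) S) (hne : S.Nonempty) : IsPrimeTTIdeal (⋂₀ S) := by
  refine ⟨isTTIdeal_sInter fun P hP => (hS P hP).toIsTTIdeal, ?_, ?_⟩
  · obtain ⟨P, hP⟩ := hne
    exact fun h => (hS P hP).unit_not_mem ((h ▸ Set.mem_univ (𝟙_ C) : 𝟙_ C ∈ ⋂₀ S) P hP)
  · intro x y hxy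
    by_contra! h
    simp only [Set.mem_sInter, not_forall] at h
    obtain ⟨⟨P, hP, hxP⟩, ⟨Q, hQ, hyQ⟩⟩ := h
    rcases hchain.total hP hQ with hPQ | hQP
    · exact ((hS P hP).mem_or_mem x y (hxy P hP)).elim hxP fun hy => hyQ (hPQ hy)
    · exact ((hS Q hQ).mem_or_mem x y (hxy Q hQ)).elim (fun hx => hxP (hQP hx)) hyQ

end Ideals

structure IsTensorMultiplicative (S : Set C) : Prop where
  unit_mem : 𝟙_ C ∈ S
  tensor_mem : ∀ a ∈ S, ∀ b ∈ S, a ⊗ b ∈ S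

section TensorExact

variable (hC : TensorExact C)
include hC

lemma isZero_tensor_of_isZero_right {z : C} (hz : IsZero z) (x : C) : IsZero (x ⊗ z) := by
  obtain ⟨_, hT⟩ := (hC x _ (contractible_distinguished z)).1
  have : IsZero (x ⊗ (0 : C)) :=
    Triangle.isZero₃_of_isIso₁ _ hT (by show IsIso (x ◁ 𝟙 z); rw [whiskerLeft_id]; infer_instance)
  exact this.of_iso (whiskerLeftIso x hz.isoZero)

lemma isZero_tensor_of_isZero_left {z : C} (hz : IsZero z) (x : C) : IsZero (z ⊗ x) := by
  obtain ⟨_, hT⟩ := (hC x _ (contractible_distinguished z)).2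
  have : IsZero ((0 : C) ⊗ x) :=
    Triangle.isZero₃_of_isIso₁ _ hT (by show IsIso (𝟙 z ▷ x); rw [id_whiskerRight]; infer_instance)
  exact this.of_iso (whiskerRightIso hz.isoZero x)

lemma isTTIdeal_setOf_isZero : IsTTIdeal {z : C | IsZero z} where
  zero_mem := isZero_zero C
  shift_mem n _ hx := (shiftFunctor C n).map_isZero hx
  cone_mem T hT h₁ h₂ := Triangle.isZero₃_of_isZero₁₂ T hT h₁ h₂
  retract_mem _ _ hz i r hir := isZero_of_retract ⟨i, r, hir⟩ hz
  tensor_mem _ hx y := isZero_tensor_of_isZero_left hC hx y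
  tensor_mem' _ hx y := isZero_tensor_of_isZero_right hC hx y

/-- Rotating the contractible triangle on `z` and tensoring with `c` gives a distinguished
triangle with zero middle term, whose third morphism is therefore invertible. -/
lemma nonempty_shift_one_tensor_iso (z c : C) :
    Nonempty (z⟦(1 : ℤ)⟧ ⊗ c ≅ (z ⊗ c)⟦(1 : ℤ)⟧) := by
  obtain ⟨h, hT⟩ := (hC c _ (rot_of_distTriang _ (contractible_distinguished z))).2
  have hiso : IsIso h := (Triangle.isZero₂_iff_isIso₃ _ hT).1
    (isZero_tensor_of_isZero_left hC (isZero_zero C) c)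
  exact ⟨@asIso _ _ _ _ h hiso⟩

variable [SymmetricCategory C]

lemma IsTTIdeal.preimage_tensorRight {I : Set C} (hI : IsTTIdeal I) (c : C) :
    IsTTIdeal {z : C | z ⊗ c ∈ I} where
  zero_mem := hI.mem_of_isZero (isZero_tensor_of_isZero_left hC (isZero_zero C) c)
  shift_mem n z := (mem_shift_iff_of_mem_shift_one_iff (J := {z : C | z ⊗ c ∈ I})
    (fun e hy => hI.mem_of_iso (whiskerRightIso e c) hy)
    (fun x => by
      obtain ⟨e⟩ := nonempty_shift_one_tensor_iso hC x c
      exact ⟨fun h => (hI.shift_mem_iff 1 _).1 (hI.mem_of_iso e.symm h),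
        fun h => hI.mem_of_iso e (hI.shift_mem 1 _ h)⟩) n z).2
  cone_mem T hT := (hI.cone_mem _ (hC c T hT).2.choose_spec)
  retract_mem x z hz i r hir := hI.retract_mem (x ⊗ c) (z ⊗ c) hz (i ▷ c) (r ▷ c)
    (by rw [← comp_whiskerRight, hir, id_whiskerRight])
  tensor_mem z hz y :=
    hI.mem_of_iso (α_ z y c ≪≫ whiskerLeftIso z (β_ y c) ≪≫ (α_ z c y).symm) (hI.tensor_mem _ hz y)
  tensor_mem' z hz y := hI.mem_of_iso (α_ y z c) (hI.tensor_mem' _ hz y)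

lemma tensor_mem_of_mem_ttIdealGen_insert {M : Set C} (hM : IsTTIdeal M) {a b : C}
    (hab : a ⊗ b ∈ M) {u v : C} (hu : u ∈ ttIdealGen (insert a M))
    (hv : v ∈ ttIdealGen (insert b M)) : u ⊗ v ∈ M := by
  have hub : u ⊗ b ∈ M := ttIdealGen_subset (hM.preimage_tensorRight hC b)
    (Set.insert_subset hab fun m hm => hM.tensor_mem m hm b) hu
  have hvu : v ⊗ u ∈ M := ttIdealGen_subset (hM.preimage_tensorRight hC u)
    (Set.insert_subset (hM.mem_of_iso (β_ b u) hub) fun m hm => hM.tensor_mem m hm u) hv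
  exact hM.mem_of_iso (β_ u v) hvu

lemma exists_isPrimeTTIdeal_disjoint {S I : Set C} (hS : IsTensorMultiplicative S)
    (hI : IsTTIdeal I) (hSI : Disjoint S I) : ∃ P, IsPrimeTTIdeal P ∧ I ⊆ P ∧ Disjoint S P := by
  have hchains : ∀ c ⊆ {J | IsTTIdeal J ∧ Disjoint S J}, IsChain (· ⊆ ·) c → c.Nonempty →
      ∃ ub ∈ {J | IsTTIdeal J ∧ Disjoint S J}, ∀ J ∈ c, J ⊆ ub := fun c hc hchain hne =>
    ⟨⋃₀ c, ⟨isTTIdeal_sUnion_of_isChain (fun J hJ => (hc hJ).1) hchain hne,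
      Set.disjoint_sUnion_right.2 fun J hJ => (hc hJ).2⟩, fun _ => Set.subset_sUnion_of_mem⟩
  obtain ⟨M, hIM, hmax⟩ := zorn_subset_nonempty _ hchains I ⟨hI, hSI⟩
  obtain ⟨hM, hSM⟩ := hmax.prop
  have meets : ∀ a ∉ M, ∃ s ∈ S, s ∈ ttIdealGen (insert a M) := by
    intro a ha
    by_contra! h
    exact ha (hmax.2 ⟨isTTIdeal_ttIdealGen _, Set.disjoint_left.2 h⟩
      ((Set.subset_insert a M).trans (subset_ttIdealGen _))
      (subset_ttIdealGen _ (Set.mem_insert a M)))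
  refine ⟨M, ⟨hM, fun h => Set.disjoint_left.1 hSM hS.unit_mem (h ▸ trivial), ?_⟩, hIM, hSM⟩
  intro a b hab
  by_contra! h
  obtain ⟨s, hs, hsa⟩ := meets a h.1
  obtain ⟨t, ht, htb⟩ := meets b h.2
  exact Set.disjoint_left.1 hSM (hS.tensor_mem s hs t ht)
    (tensor_mem_of_mem_ttIdealGen_insert hC hM hab hsa htb)

lemma exists_isPrimeTTIdeal_disjoint_of_not_isZero {S : Set C} (hS : IsTensorMultiplicative S)
    (hnz : ∀ s ∈ S, ¬ IsZero s) : ∃ P, IsPrimeTTIdeal P ∧ Disjoint S P :=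
  let ⟨P, hP, _, hSP⟩ := exists_isPrimeTTIdeal_disjoint hC hS (isTTIdeal_setOf_isZero hC)
    (Set.disjoint_left.2 hnz)
  ⟨P, hP, hSP⟩

/-- `x` is a retract of `(x ⊗ x^∨) ⊗ x` through the triangle identity of the exact pairing. -/
lemma isZero_tensor_of_isZero_tensor_self {x xd : C} [ExactPairing xd x] (y : C)
    (h : IsZero ((y ⊗ x) ⊗ x)) : IsZero (y ⊗ x) := by
  let r : Retract x ((x ⊗ xd) ⊗ x) :=
    ⟨(ρ_ x).inv ≫ x ◁ η_ xd x ≫ (α_ x xd x).inv, ε_ xd x ▷ x ≫ (λ_ x).hom, by simp⟩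
  refine isZero_of_retract (r.map (tensorLeft y)) ((isZero_tensor_of_isZero_left hC h xd).of_iso ?_)
  exact whiskerLeftIso y (β_ (x ⊗ xd) x) ≪≫ (α_ y x (x ⊗ xd)).symm ≪≫ (α_ (y ⊗ x) x xd).symm

lemma not_isZero_opow {x xd : C} [ExactPairing xd x] (hx : ¬ IsZero x) :
    ∀ n, ¬ IsZero (opow x n)
  | 0 => fun h => hx ((isZero_tensor_of_isZero_left hC h x).of_iso (λ_ x).symm)
  | 1 => fun h => hx (h.of_iso (λ_ x).symm)
  | n + 2 => fun h =>
    not_isZero_opow (xd := xd) hx (n + 1) (isZero_tensor_of_isZero_tensor_self hC (xd := xd) _ h)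

lemma exists_isPrimeTTIdeal_not_mem {z zd : C} [ExactPairing zd z] (hz : ¬ IsZero z) :
    ∃ P, IsPrimeTTIdeal P ∧ z ∉ P := by
  have hS : IsTensorMultiplicative {w : C | ∃ n, Nonempty (w ≅ opow z n)} :=
    ⟨⟨0, ⟨Iso.refl _⟩⟩, fun a ⟨n, ⟨e⟩⟩ b ⟨m, ⟨e'⟩⟩ =>
      ⟨n + m, ⟨tensorIso e e' ≪≫ (nonempty_opow_add_iso z n m).some.symm⟩⟩⟩
  obtain ⟨P, hP, hdisj⟩ := exists_isPrimeTTIdeal_disjoint_of_not_isZero hC hS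
    fun w ⟨n, ⟨e⟩⟩ hw => not_isZero_opow hC (xd := zd) hz n (hw.of_iso e.symm)
  exact ⟨P, hP, Set.disjoint_left.1 hdisj ⟨1, ⟨(λ_ z).symm⟩⟩⟩

end TensorExact

namespace Spc

lemma specializes_of_subset {P Q : Spc C} (h : P.1 ⊆ Q.1) : Q ⤳ P := by
  show nhds Q ≤ nhds P
  rw [TopologicalSpace.nhds_generateFrom, TopologicalSpace.nhds_generateFrom]
  exact le_iInf₂ fun s ⟨hPs, x, hs⟩ => iInf₂_le s ⟨by subst hs; exact h hPs, x, hs⟩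

lemma isClosed_singleton_iff {P : Spc C} :
    IsClosed ({P} : Set (Spc C)) ↔ ∀ Q : Spc C, Q.1 ⊆ P.1 → Q = P := by
  refine ⟨fun hP Q hQ => (specializes_of_subset hQ).mem_closed hP rfl, fun hmin => ?_⟩
  have : ({P}ᶜ : Set (Spc C)) = ⋃ x ∉ P.1, {Q : Spc C | x ∈ Q.1} := by
    ext Q
    simp only [Set.mem_compl_iff, Set.mem_singleton_iff, Set.mem_iUnion, Set.mem_ofPred_eq,
      exists_prop]
    refine ⟨fun hQP => ?_, fun ⟨x, hxP, hxQ⟩ hQP => hxP (hQP ▸ hxQ)⟩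
    by_contra! h
    exact hQP (hmin Q fun x hxQ => by_contra fun hxP => h x hxP hxQ)
  rw [← isOpen_compl_iff, this]
  exact isOpen_biUnion fun x _ => TopologicalSpace.isOpen_generateFrom_of_mem ⟨x, rfl⟩

lemma exists_isClosed_singleton_subset (P : Spc C) :
    ∃ P₀ : Spc C, IsClosed ({P₀} : Set (Spc C)) ∧ P₀.1 ⊆ P.1 := by
  have hchains : ∀ c ⊆ {A : Set C | IsPrimeTTIdeal A}, IsChain (· ⊆ ·) c → c.Nonempty →
      ∃ lb ∈ {A : Set C | IsPrimeTTIdeal A}, ∀ A ∈ c, lb ⊆ A := fun c hc hchain hne =>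
    ⟨⋂₀ c, isPrimeTTIdeal_sInter_of_isChain (fun _ hA => hc hA) hchain hne,
      fun _ => Set.sInter_subset_of_mem⟩
  obtain ⟨m, hmP, hmin⟩ := zorn_superset_nonempty _ hchains P.1 P.2
  exact ⟨⟨m, hmin.prop⟩, isClosed_singleton_iff.2 fun Q hQ =>
    Subtype.ext (hQ.antisymm (hmin.2 Q.2 hQ)), hmP⟩

end Spc

section Functor

variable {D : Type u'} [Category.{v'} D] [HasZeroObject D] [Preadditive D]
  [HasShift D ℤ] [∀ n : ℤ, (shiftFunctor D n).Additive] [Pretriangulated D]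
  [MonoidalCategory D]
variable (F : C ⥤ D) [F.CommShift ℤ] [F.IsTriangulated]

lemma IsTTIdeal.preimage [F.Monoidal] {Q : Set D} (hQ : IsTTIdeal Q) :
    IsTTIdeal {x : C | F.obj x ∈ Q} where
  zero_mem := hQ.mem_of_isZero (F.map_isZero (isZero_zero C))
  shift_mem n x hx := hQ.mem_of_iso ((F.commShiftIso n).app x) (hQ.shift_mem n _ hx)
  cone_mem T hT := hQ.cone_mem _ (F.map_distinguished T hT)
  retract_mem x z hz i r hir :=
    hQ.retract_mem _ _ hz (F.map i) (F.map r) (by rw [← F.map_comp, hir, F.map_id])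
  tensor_mem x hx y := hQ.mem_of_iso (Functor.Monoidal.μIso F x y).symm (hQ.tensor_mem _ hx _)
  tensor_mem' x hx y := hQ.mem_of_iso (Functor.Monoidal.μIso F y x).symm (hQ.tensor_mem' _ hx _)

lemma IsPrimeTTIdeal.preimage [F.Monoidal] {Q : Set D} (hQ : IsPrimeTTIdeal Q) :
    IsPrimeTTIdeal {x : C | F.obj x ∈ Q} where
  toIsTTIdeal := hQ.toIsTTIdeal.preimage F
  ne_univ h := hQ.unit_not_mem
    (hQ.mem_of_iso (Functor.Monoidal.εIso F) (show 𝟙_ C ∈ {x : C | F.obj x ∈ Q} from h ▸ trivial))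
  mem_or_mem x y h := hQ.mem_or_mem _ _ (hQ.mem_of_iso (Functor.Monoidal.μIso F x y) h)

lemma exists_preimage_eq_of_conservative [F.Monoidal] [SymmetricCategory D] (hD : TensorExact D)
    (hF : ∀ ⦃x y : C⦄ (f : x ⟶ y), IsIso (F.map f) → IsIso f) {P : Spc C}
    (hP : IsClosed ({P} : Set (Spc C))) : ∃ Q : Spc D, {x : C | F.obj x ∈ Q.1} = P.1 := by
  have hS : IsTensorMultiplicative {y : D | ∃ s ∉ P.1, Nonempty (y ≅ F.obj s)} :=
    ⟨⟨𝟙_ C, P.2.unit_not_mem, ⟨Functor.Monoidal.εIso F⟩⟩,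
      fun a ⟨s, hs, ⟨e⟩⟩ b ⟨t, ht, ⟨e'⟩⟩ => ⟨s ⊗ t, fun hst => (P.2.mem_or_mem s t hst).elim hs ht,
        ⟨tensorIso e e' ≪≫ Functor.Monoidal.μIso F s t⟩⟩⟩
  obtain ⟨Q, hQ, hdisj⟩ := exists_isPrimeTTIdeal_disjoint_of_not_isZero hD hS
    fun y ⟨s, hs, ⟨e⟩⟩ hy => hs (P.2.mem_of_isZero (isZero_of_isZero_map F hF (hy.of_iso e.symm)))
  have hsub : {x : C | F.obj x ∈ Q} ⊆ P.1 := fun x hx =>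
    by_contra fun hxP => Set.disjoint_left.1 hdisj ⟨x, hxP, ⟨Iso.refl _⟩⟩ hx
  exact ⟨⟨Q, hQ⟩, congrArg Subtype.val (Spc.isClosed_singleton_iff.1 hP ⟨_, hQ.preimage F⟩ hsub)⟩

lemma conservative_of_surjective_on_closed_points [SymmetricCategory C] (hC : TensorExact C)
    (hrigid : Rigid C)
    (hsurj : ∀ P : Spc C, IsClosed ({P} : Set (Spc C)) →
      ∃ Q : Spc D, {x : C | F.obj x ∈ Q.1} = P.1) :
    ∀ ⦃x y : C⦄ (f : x ⟶ y), IsIso (F.map f) → IsIso f := by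
  intro x y f hf
  obtain ⟨z, _, _, hT⟩ := distinguished_cocone_triangle f
  have hFz : IsZero (F.obj z) :=
    (Triangle.isZero₃_iff_isIso₁ _ (F.map_distinguished _ hT)).2 hf
  suffices IsZero z from (Triangle.isZero₃_iff_isIso₁ _ hT).1 this
  by_contra hz
  obtain ⟨zd, ⟨_⟩⟩ := hrigid z
  obtain ⟨P, hP, hzP⟩ := exists_isPrimeTTIdeal_not_mem hC (zd := zd) hz
  obtain ⟨P₀, hP₀, hP₀P⟩ := Spc.exists_isClosed_singleton_subset ⟨P, hP⟩
  obtain ⟨Q, hQ⟩ := hsurj P₀ hP₀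
  exact hzP (hP₀P (hQ ▸ Q.2.mem_of_isZero hFz))

end Functor

end TT

open TT

variable {K : Type u} [Category.{v} K] [HasZeroObject K] [Preadditive K]
  [HasShift K ℤ] [∀ n : ℤ, (shiftFunctor K n).Additive] [Pretriangulated K]
  [MonoidalCategory K] [SymmetricCategory K] [EssentiallySmall.{v} K]
variable {L : Type u'} [Category.{v'} L] [HasZeroObject L] [Preadditive L]
  [HasShift L ℤ] [∀ n : ℤ, (shiftFunctor L n).Additive] [Pretriangulated L]
  [MonoidalCategory L] [SymmetricCategory L] [EssentiallySmall.{v'} L]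

/-- **Theorem (Balmer).** Let `K`, `L` be essentially small tt-categories with `K` rigid
and `F : K ⥤ L` a tt-functor. Then `F` is conservative (detects isomorphisms) if and
only if the induced map `φ = Spc F : Spc L → Spc K`, `Q ↦ F⁻¹(Q)`, is surjective on
closed points. -/
theorem conservative_iff_surjective_on_closed_points
    (hK : TensorExact K) (hL : TensorExact L) (hrigid : Rigid K)
    (F : K ⥤ L) [F.CommShift ℤ] [F.IsTriangulated] [F.Monoidal] :
    (∀ ⦃x y : K⦄ (f : x ⟶ y), IsIso (F.map f) → IsIso f) ↔
      (∀ P : Spc K, IsClosed ({P} : Set (Spc K)) →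
        ∃ Q : Spc L, {x : K | F.obj x ∈ Q.1} = P.1) :=
  ⟨fun hF _ hP => exists_preimage_eq_of_conservative F hL hF hP,
    conservative_of_surjective_on_closed_points F hK hrigid⟩
end

section
/- Let K be a tt-category (not necessarily rigid) and let f : x → y be a morphism in K. Then the class of objects {z ∈ K : f is ⊗-nilpotent on z} = {z ∈ K : f^⊗n ⊗ z = 0 for some n ≥ 1} forms a tt-ideal of K; in particular it is closed under cones: if z₁ → z₂ → z₃ → Σz₁ is a distinguished triangle and f is ⊗-nilpotent on z₁ and on z₂, then f is ⊗-nilpotent on z₃. -/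
/-!
Basic notions of tensor-triangular geometry (Balmer), formalized from scratch:
tt-categories (pretriangulated + monoidal, with tensor exact in each variable),
tt-ideals, prime tt-ideals, the Balmer spectrum `Spc` with its topology,
tensor powers of objects and morphisms, rigidity.
-/

open CategoryTheory Category Limits ZeroObject Pretriangulated MonoidalCategory

universe v u v' u'

open TT

variable {K : Type u} [Category.{v} K] [HasZeroObject K] [Preadditive K]
  [HasShift K ℤ] [∀ n : ℤ, (shiftFunctor K n).Additive] [Pretriangulated K]
  [MonoidalCategory K] [SymmetricCategory K] [EssentiallySmall.{v} K]

/-!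
If `g ▷ z = 0` then also `g ▷ w = 0` for every retract `w` of `z`, for `w = z ⊗ c` (exactness of the
tensor gives `0 ⊗ c ≅ 0`) and for `w = z⟦n⟧ ≅ 𝟙⟦n⟧ ⊗ z`. For a distinguished triangle
`z₁ → z₂ → z₃ → z₁⟦1⟧` and `g : A ⟶ B` killing `z₂`, exactness of `A ⊗ -` factors `g ▷ z₃` through
`(A ⊗ z₁)⟦1⟧`, so `g' ⊗ g` kills `z₃` as soon as `g'` kills `z₁`. Since `f^⊗(n₁ + n₂)` is
`f^⊗n₁ ⊗ f^⊗n₂` up to isomorphism, `f` is nilpotent on `z₃` once it is on `z₁` and `z₂`.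
-/

namespace TT

section Monoidal

variable {C : Type*} [Category C] [MonoidalCategory C]

def opowAddIso (x : C) (n : ℕ) : ∀ k : ℕ, opow x (n + k) ≅ opow x n ⊗ opow x k
  | 0 => (ρ_ (opow x n)).symm
  | k + 1 => whiskerRightIso (opowAddIso x n k) x ≪≫ α_ (opow x n) (opow x k) x

lemma mpow_add {x y : C} (f : x ⟶ y) (n k : ℕ) :
    mpow f (n + k) =
      (opowAddIso x n k).hom ≫ (mpow f n ⊗ₘ mpow f k) ≫ (opowAddIso y n k).inv := by
  induction k with
  | zero =>
    change mpow f n = (ρ_ _).inv ≫ (mpow f n ⊗ₘ 𝟙 (𝟙_ C)) ≫ (ρ_ _).hom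
    simp
  | succ k ih =>
    change mpow f (n + k) ⊗ₘ f = ((opowAddIso x n k).hom ▷ x ≫ (α_ _ _ _).hom) ≫
      (mpow f n ⊗ₘ (mpow f k ⊗ₘ f)) ≫ ((α_ _ _ _).inv ≫ (opowAddIso y n k).inv ▷ y)
    rw [assoc, ← associator_naturality_assoc, Iso.hom_inv_id_assoc, ← tensorHom_id,
      ← tensorHom_id, tensorHom_comp_tensorHom, tensorHom_comp_tensorHom, ih, id_comp, comp_id]

variable [HasZeroMorphisms C]

lemma whiskerRight_eq_zero_of_retract {A B : C} (g : A ⟶ B) {w z : C} (i : w ⟶ z) (r : z ⟶ w)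
    (hir : i ≫ r = 𝟙 w) (h : g ▷ z = 0) : g ▷ w = 0 :=
  calc g ▷ w = g ▷ w ≫ B ◁ i ≫ B ◁ r := by
        rw [← MonoidalCategory.whiskerLeft_comp, hir, MonoidalCategory.whiskerLeft_id, comp_id]
    _ = A ◁ i ≫ g ▷ z ≫ B ◁ r := by rw [whisker_exchange_assoc]
    _ = 0 := by rw [h, zero_comp, comp_zero]

lemma whiskerRight_eq_zero_of_iso {A B : C} (g : A ⟶ B) {w z : C} (e : w ≅ z)
    (h : g ▷ z = 0) : g ▷ w = 0 :=
  whiskerRight_eq_zero_of_retract g e.hom e.inv e.hom_inv_id h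

lemma tensorHom_whiskerRight_eq_zero_of_factor {A B A' B' z W : C} (g' : A' ⟶ B') (g : A ⟶ B)
    (u : A ⊗ z ⟶ W) (v : W ⟶ B ⊗ z) (hg : g ▷ z = u ≫ v) (hg' : g' ▷ W = 0) :
    (g' ⊗ₘ g) ▷ z = 0 := by
  have hfac : g' ⊗ₘ (g ▷ z) = 0 := by
    rw [hg, ← whiskerLeft_comp_tensorHom, MonoidalCategory.tensorHom_def g' v, hg', zero_comp,
      comp_zero]
  have hassoc := associator_naturality g' g (𝟙 z)
  rw [tensorHom_id, tensorHom_id, hfac, comp_zero] at hassoc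
  simpa using hassoc =≫ (α_ B' B z).inv

end Monoidal

section Triangulated

variable {C : Type*} [Category C] [HasZeroObject C] [Preadditive C] [HasShift C ℤ]
  [∀ n : ℤ, (shiftFunctor C n).Additive] [Pretriangulated C] [MonoidalCategory C]

namespace TensorExact

variable (hC : TensorExact C)
include hC

lemma isZero_zero_tensor (c : C) : IsZero ((0 : C) ⊗ c) := by
  obtain ⟨_, hT⟩ := (hC c _ (contractible_distinguished (𝟙_ C))).2
  refine Triangle.isZero₃_of_isIso₁ _ hT ?_
  change IsIso (𝟙 (𝟙_ C) ▷ c)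
  rw [id_whiskerRight]
  infer_instance

lemma zero_whiskerRight {P Q : C} (c : C) : (0 : P ⟶ Q) ▷ c = 0 := by
  rw [← zero_comp (X := P) (Y := 0) (f := (0 : (0 : C) ⟶ Q)), comp_whiskerRight,
    (hC.isZero_zero_tensor c).eq_of_tgt ((0 : P ⟶ 0) ▷ c) 0, zero_comp]

lemma whiskerRight_tensor_eq_zero {A B z : C} {g : A ⟶ B} (h : g ▷ z = 0) (c : C) :
    g ▷ (z ⊗ c) = 0 := by
  rw [whiskerRight_tensor, h, hC.zero_whiskerRight, zero_comp, comp_zero]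

lemma nonempty_shift_one_tensor_iso (a w : C) :
    Nonempty ((a⟦(1 : ℤ)⟧ ⊗ w) ≅ (a ⊗ w)⟦(1 : ℤ)⟧) := by
  obtain ⟨_, hT⟩ :=
    (hC w _ (rot_of_distTriang _ (contractible_distinguished a))).2
  exact ⟨Triangle.π₃.mapIso (isoTriangleOfIso₁₂ _ _ hT
    (rot_of_distTriang _ (contractible_distinguished (a ⊗ w))) (Iso.refl _)
    ((hC.isZero_zero_tensor w).iso (isZero_zero C)) ((isZero_zero C).eq_of_tgt _ _))⟩

lemma nonempty_unit_shift_tensor_iso (n : ℤ) (w : C) :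
    Nonempty (((𝟙_ C)⟦n⟧ ⊗ w) ≅ w⟦n⟧) := by
  induction n using Int.induction_on with
  | zero =>
    exact ⟨whiskerRightIso ((shiftFunctorZero C ℤ).app _) w ≪≫ λ_ w ≪≫
      ((shiftFunctorZero C ℤ).app w).symm⟩
  | succ n ih =>
    obtain ⟨e⟩ := ih
    obtain ⟨s⟩ := hC.nonempty_shift_one_tensor_iso ((𝟙_ C)⟦(n : ℤ)⟧) w
    exact ⟨whiskerRightIso ((shiftFunctorAdd C (n : ℤ) 1).app _) w ≪≫ s ≪≫
      (shiftFunctor C (1 : ℤ)).mapIso e ≪≫ ((shiftFunctorAdd C (n : ℤ) 1).app w).symm⟩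
  | pred n ih =>
    obtain ⟨e⟩ := ih
    obtain ⟨s⟩ := hC.nonempty_shift_one_tensor_iso ((𝟙_ C)⟦-(n : ℤ) - 1⟧) w
    have hn : -(n : ℤ) - 1 + 1 = -n := by ring
    exact ⟨(shiftFunctor C (1 : ℤ)).preimageIso (s.symm ≪≫
      whiskerRightIso ((shiftFunctorAdd' C _ 1 _ hn).app _).symm w ≪≫ e ≪≫
      (shiftFunctorAdd' C _ 1 _ hn).app w)⟩

variable [BraidedCategory C]

lemma isZero_tensor_zero (c : C) : IsZero (c ⊗ (0 : C)) :=
  (hC.isZero_zero_tensor c).of_iso (β_ c 0)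

lemma whiskerRight_tensor_eq_zero' {A B z : C} {g : A ⟶ B} (h : g ▷ z = 0) (c : C) :
    g ▷ (c ⊗ z) = 0 :=
  whiskerRight_eq_zero_of_iso g (β_ c z) (hC.whiskerRight_tensor_eq_zero h c)

lemma whiskerRight_shift_eq_zero {A B z : C} {g : A ⟶ B} (h : g ▷ z = 0) (n : ℤ) :
    g ▷ (z⟦n⟧) = 0 := by
  obtain ⟨e⟩ := hC.nonempty_unit_shift_tensor_iso n z
  exact whiskerRight_eq_zero_of_iso g e.symm (hC.whiskerRight_tensor_eq_zero' h _)

lemma tensorHom_whiskerRight_obj₃_eq_zero {A B A' B' : C} (g' : A' ⟶ B') (g : A ⟶ B)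
    (T : Triangle C) (hT : T ∈ distTriang C) (h₁ : g' ▷ T.obj₁ = 0) (h₂ : g ▷ T.obj₂ = 0) :
    (g' ⊗ₘ g) ▷ T.obj₃ = 0 := by
  obtain ⟨δ, hAT⟩ := (hC A T hT).1
  obtain ⟨t, ht⟩ := Triangle.yoneda_exact₃ _ hAT (g ▷ T.obj₃) (by
    change A ◁ T.mor₂ ≫ g ▷ T.obj₃ = 0
    rw [whisker_exchange, h₂, zero_comp])
  exact tensorHom_whiskerRight_eq_zero_of_factor g' g δ t ht
    (hC.whiskerRight_shift_eq_zero (hC.whiskerRight_tensor_eq_zero' h₁ A) 1)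

end TensorExact

end Triangulated

end TT

/-- **Proposition (Balmer).** Let `K` be a tt-category (not necessarily rigid) and
`f : x ⟶ y` a morphism. Then `{z ∈ K | f` is ⊗-nilpotent on `z}`, i.e.
`{z | f^⊗n ⊗ z = 0 for some n ≥ 1}`, is a tt-ideal of `K`; in particular it is closed
under cones (this is the `cone_mem` field of `IsTTIdeal`). -/
theorem isTTIdeal_nilpotent_locus
    (hK : TensorExact K) {x y : K} (f : x ⟶ y) :
    IsTTIdeal {z : K | ∃ n : ℕ, 1 ≤ n ∧ mpow f n ▷ z = 0} :=
  { zero_mem := ⟨1, le_rfl, (hK.isZero_tensor_zero _).eq_of_tgt _ _⟩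
    shift_mem n z := fun ⟨m, hm, h⟩ ↦ ⟨m, hm, hK.whiskerRight_shift_eq_zero h n⟩
    cone_mem T hT := fun ⟨n₁, hn₁, h₁⟩ ⟨n₂, _, h₂⟩ ↦ ⟨n₁ + n₂, by omega, by
      rw [mpow_add, comp_whiskerRight, comp_whiskerRight,
        hK.tensorHom_whiskerRight_obj₃_eq_zero _ _ T hT h₁ h₂, zero_comp, comp_zero]⟩
    retract_mem w z := fun ⟨n, hn, h⟩ i r hir ↦
      ⟨n, hn, whiskerRight_eq_zero_of_retract _ i r hir h⟩
    tensor_mem z := fun ⟨n, hn, h⟩ c ↦ ⟨n, hn, hK.whiskerRight_tensor_eq_zero h c⟩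
    tensor_mem' z := fun ⟨n, hn, h⟩ c ↦ ⟨n, hn, hK.whiskerRight_tensor_eq_zero' h c⟩ }
end
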